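/- arXiv:1911.01687 — 7 statements merged into one kernel-verified Lean document; each statement's English description precedes it below -/
import Mathlib

section
/- Let k ≥ 1 and let τ_k be the morphism on the alphabet {1,2} with τ_k(1) = 1^{k-1}·2 and τ_k(2) = 1^{k-1}·2·1^{k+1}. Then for all n ≥ 0, the length of the word τ_k^n(1) equals W_k(n+1) = ((k+1)^{n+1} - (-1)^{n+1})/(k+2). -/
/-! Each letter's image has length `k` or `2k + 1` and exactly one letter `≠ 1`, so with
`t w` the number of letters `≠ 1` in `w`: `|τ w| = k |w| + (k + 1) t w` and `t (τ w) = |w|`.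
Hence `a n = |τⁿ(1)|` satisfies `a (n + 2) = k a (n + 1) + (k + 1) a n`, whose characteristic
roots are `k + 1` and `-1`. -/

/-- The morphism `τ_k : 1 ↦ 1^{k-1}2, 2 ↦ 1^{k-1}2·1^{k+1}` on words over `{1,2}`. -/
def tauk (k : ℕ) : List ℕ → List ℕ := fun w =>
  w.flatMap fun c =>
    if c = 1 then List.replicate (k - 1) 1 ++ [2]
    else List.replicate (k - 1) 1 ++ [2] ++ List.replicate (k + 1) 1

theorem tauk_cons (k a : ℕ) (w : List ℕ) :
    tauk k (a :: w) =
      (if a = 1 then List.replicate (k - 1) 1 ++ [2]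
       else List.replicate (k - 1) 1 ++ [2] ++ List.replicate (k + 1) 1) ++ tauk k w := by
  simp [tauk]

theorem length_tauk {k : ℕ} (hk : 1 ≤ k) (w : List ℕ) :
    (tauk k w).length = k * w.length + (k + 1) * w.countP (· ≠ 1) := by
  induction w with
  | nil => rfl
  | cons a w ih =>
    rw [tauk_cons]
    by_cases h : a = 1 <;> simp [h, ih] <;> grind

theorem countP_ne_one_tauk (k : ℕ) (w : List ℕ) :
    (tauk k w).countP (· ≠ 1) = w.length := by
  induction w with
  | nil => rfl
  | cons a w ih =>
    rw [tauk_cons]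
    by_cases h : a = 1 <;> simpa [h, List.countP_replicate] using ih

theorem length_iterate_tauk_add_two {k : ℕ} (hk : 1 ≤ k) (n : ℕ) :
    ((tauk k)^[n + 2] [1]).length =
      k * ((tauk k)^[n + 1] [1]).length + (k + 1) * ((tauk k)^[n] [1]).length := by
  rw [Function.iterate_succ_apply' _ (n + 1), length_tauk hk, Function.iterate_succ_apply',
    countP_ne_one_tauk]

theorem mul_eq_of_two_step_recurrence (c : ℤ) {u : ℕ → ℤ} (h0 : u 0 = 1) (h1 : u 1 = c)
    (hrec : ∀ n, u (n + 2) = c * u (n + 1) + (c + 1) * u n) (n : ℕ) :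
    (c + 2) * u n = (c + 1) ^ (n + 1) - (-1) ^ (n + 1) := by
  induction n using Nat.twoStepInduction with
  | zero => rw [h0]; ring
  | one => rw [h1]; ring
  | more n ih₀ ih₁ =>
    calc (c + 2) * u (n + 2)
        = c * ((c + 2) * u (n + 1)) + (c + 1) * ((c + 2) * u n) := by rw [hrec]; ring
      _ = (c + 1) ^ (n + 3) - (-1) ^ (n + 3) := by rw [ih₀, ih₁]; ring

theorem stmt_5 (k : ℕ) (hk : 1 ≤ k) (n : ℕ) :
    (((tauk k)^[n] [1]).length : ℤ) =
      (((k : ℤ) + 1) ^ (n + 1) - (-1) ^ (n + 1)) / ((k : ℤ) + 2) := by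
  have hrec (m : ℕ) : (((tauk k)^[m + 2] [1]).length : ℤ) =
      k * ((tauk k)^[m + 1] [1]).length + (k + 1) * ((tauk k)^[m] [1]).length := by
    exact_mod_cast length_iterate_tauk_add_two hk m
  have key := mul_eq_of_two_step_recurrence (k : ℤ) (u := fun m => ((tauk k)^[m] [1]).length)
    rfl (by simp [length_tauk hk]) hrec n
  exact (Int.ediv_eq_of_eq_mul_left (by positivity) (key.symm.trans (mul_comm _ _))).symm
end

section
/- Let k ≥ 1 and let τ_k be the morphism on {1,2} with τ_k(1) = 1^{k-1}·2 and τ_k(2) = 1^{k-1}·2·1^{k+1}. Then for all m ≥ 0, τ_k^{m+2}(1) = (τ_k^{m+1}(1))^k · (τ_k^m(1))^{k+1}, i.e., the word τ_k^{m+2}(1) is the concatenation of k copies of τ_k^{m+1}(1) followed by k+1 copies of τ_k^m(1). -/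
theorem List.iterate_flatMap_flatten {α : Type*} (f : α → List α) (n : ℕ) (L : List (List α)) :
    (fun w => w.flatMap f)^[n] L.flatten = (L.map (fun w => w.flatMap f)^[n]).flatten := by
  induction n generalizing L with
  | zero => simp
  | succ n ih =>
    have hstep : L.flatten.flatMap f = (L.map fun w => w.flatMap f).flatten := by
      induction L <;> simp_all
    rw [Function.iterate_succ_apply, hstep, ih, List.map_map, Function.iterate_succ]

theorem tauk_iterate_flatten (k n : ℕ) (L : List (List ℕ)) :
    (tauk k)^[n] L.flatten = (L.map (tauk k)^[n]).flatten :=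
  List.iterate_flatMap_flatten _ n L

theorem tauk_iterate_succ_one (k n : ℕ) :
    (tauk k)^[n + 1] [1] =
      (List.replicate (k - 1) ((tauk k)^[n] [1])).flatten ++ (tauk k)^[n] [2] := by
  have h : tauk k [1] = (List.replicate (k - 1) [1] ++ [[2]]).flatten := by simp [tauk]
  rw [Function.iterate_succ_apply, h, tauk_iterate_flatten]
  simp

theorem tauk_iterate_succ_two (k n : ℕ) :
    (tauk k)^[n + 1] [2] =
      (tauk k)^[n + 1] [1] ++ (List.replicate (k + 1) ((tauk k)^[n] [1])).flatten := by
  have h : tauk k [2] = ([tauk k [1]] ++ List.replicate (k + 1) [1]).flatten := by simp [tauk]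
  rw [Function.iterate_succ_apply, h, tauk_iterate_flatten, Function.iterate_succ_apply]
  simp

theorem stmt_6 (k : ℕ) (hk : 1 ≤ k) (m : ℕ) :
    (tauk k)^[m + 2] [1] =
      (List.replicate k ((tauk k)^[m + 1] [1])).flatten ++
        (List.replicate (k + 1) ((tauk k)^[m] [1])).flatten := by
  obtain ⟨j, rfl⟩ : ∃ j, k = j + 1 := ⟨k - 1, by omega⟩
  rw [tauk_iterate_succ_one, tauk_iterate_succ_two, ← List.append_assoc, Nat.add_sub_cancel,
    List.replicate_succ' (n := j), List.flatten_append, List.flatten_singleton]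
end

section
/- Let k ≥ 1. Let τ_k be the morphism on {1,2} with τ_k(1) = 1^{k-1}2, τ_k(2) = 1^{k-1}2·1^{k+1}, let σ_k be the morphism on {0,1} with σ_k(0) = 0^k 1, σ_k(1) = 0^{k+1}, and let ρ_0 be the morphism 0 → 1^{k-1}2, 1 → 1^{k+1}. Then for all n ≥ 1, τ_k^{n+1}(1) = ρ_0(σ_k^n(0)). -/
/-- The morphism `σ_k : 0 ↦ 0^k 1, 1 ↦ 0^{k+1}`. -/
def sigmak (k : ℕ) : List ℕ → List ℕ := fun w =>
  w.flatMap fun c =>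
    if c = 0 then List.replicate k 0 ++ [1] else List.replicate (k + 1) 0

/-- The morphism `ρ_0 : 0 ↦ 1^{k-1}2, 1 ↦ 1^{k+1}`. -/
def rho0 (k : ℕ) : List ℕ → List ℕ := fun w =>
  w.flatMap fun c =>
    if c = 0 then List.replicate (k - 1) 1 ++ [2] else List.replicate (k + 1) 1

lemma tauk_rho0_singleton {k : ℕ} (hk : 1 ≤ k) (c : ℕ) :
    tauk k (rho0 k [c]) = rho0 k (sigmak k [c]) := by
  obtain ⟨m, rfl⟩ : ∃ m, k = m + 1 := ⟨k - 1, by omega⟩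
  by_cases hc : c = 0
  · simp [tauk, rho0, sigmak, hc, List.flatMap_replicate, List.replicate_succ' (n := m)]
  · simp [tauk, rho0, sigmak, hc, List.flatMap_replicate]

lemma semiconj_rho0_sigmak_tauk {k : ℕ} (hk : 1 ≤ k) :
    Function.Semiconj (rho0 k) (sigmak k) (tauk k) := fun w => by
  have h := tauk_rho0_singleton hk
  simp only [tauk, rho0, sigmak, List.flatMap_singleton] at h ⊢
  simp only [List.flatMap_assoc, h]

theorem stmt_8_general (k : ℕ) (hk : 1 ≤ k) (n : ℕ) :
    (tauk k)^[n + 1] [1] = rho0 k ((sigmak k)^[n] [0]) := by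
  have h_start : tauk k [1] = rho0 k [0] := by simp [tauk, rho0]
  rw [Function.iterate_succ_apply, h_start]
  exact ((semiconj_rho0_sigmak_tauk hk).iterate_right n [0]).symm

theorem stmt_8 (k : ℕ) (hk : 1 ≤ k) (n : ℕ) (hn : 1 ≤ n) :
    (tauk k)^[n + 1] [1] = rho0 k ((sigmak k)^[n] [0]) :=
  stmt_8_general k hk n
end

section
/- Let k ≥ 1 and let Γ: {0,1}* → ℕ* be the map sending a word w = 0^{x_0} 1 0^{x_1} 1 ⋯ 0^{x_n} 1 0^{x_{n+1}} to the word x_1 x_2 ⋯ x_n recording the lengths of zero-blocks between consecutive 1's. Let σ_k: 0 → 0^k 1, 1 → 0^{k+1} and τ_k: 1 → 1^{k-1}2, 2 → 1^{k-1}2·1^{k+1}, and let ρ_2 be the letter-coding 1 → k, 2 → 2k+1. Then for all n ≥ 1 and j ≥ 1, Γ((σ_k^n(0))^j · σ_k(0)) = (ρ_2(τ_k^{n-1}(1)))^j. -/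
/-!
Write a binary word ending in `1` as `ofGaps x = 0^{x_1} 1 ⋯ 0^{x_m} 1`, so that `Γ` recovers
`x_2 ⋯ x_m` from it. Up to conjugation by `σ_k(0) = 0^k 1`, the morphism `σ_k` acts on such words
as the morphism `x ↦ k^{x-1} (2k+1)` of gap words, and `ρ_2 ∘ τ_k` is conjugate to that same
morphism composed with `ρ_2`, by `ρ_2(τ_k(1)) = k^{k-1} (2k+1)`. Induction on `n` then gives
`σ_k^n(0) σ_k(0) = σ_k(0) · ofGaps (ρ_2(τ_k^{n-1}(1)))`, an identity that passes to `j`-th powers,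
and `Γ` strips the leading gap `k` contributed by `σ_k(0)`.
-/

/-- `Γ` maps a binary word `0^{x_0}1 0^{x_1}1 ⋯ 0^{x_n}1 0^{x_{n+1}}` to the word
`x_1 x_2 ⋯ x_n` of lengths of zero-blocks between consecutive 1's. -/
def gaps (w : List ℕ) : List ℕ := (((w.splitOn 1).drop 1).dropLast).map List.length

/-- The letter-to-letter coding `ρ_2 : 1 ↦ k, 2 ↦ 2k+1`. -/
def rho2 (k : ℕ) : List ℕ → List ℕ := fun w =>
  w.map fun c => if c = 1 then k else 2 * k + 1

def ofGaps (u : List ℕ) : List ℕ := u.flatMap fun x => List.replicate x 0 ++ [1]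

def gapSigma (k : ℕ) (u : List ℕ) : List ℕ :=
  u.flatMap fun x => List.replicate (x - 1) k ++ [2 * k + 1]

theorem List.flatMap_append_eq_append_flatMap {α β : Type*} {f g : α → List β} {c : List β}
    {u : List α} (h : ∀ x ∈ u, f x ++ c = c ++ g x) :
    u.flatMap f ++ c = c ++ u.flatMap g := by
  induction u with
  | nil => simp
  | cons x u ih =>
    simp only [List.flatMap_cons, List.append_assoc]
    rw [ih fun y hy => h y (List.mem_cons_of_mem x hy), ← List.append_assoc,
      h x List.mem_cons_self, List.append_assoc]

theorem List.flatten_replicate_append_eq {α : Type*} {a b c : List α} (h : a ++ c = c ++ b)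
    (j : ℕ) : (List.replicate j a).flatten ++ c = c ++ (List.replicate j b).flatten := by
  induction j with
  | zero => simp
  | succ j ih =>
    simp only [List.replicate_succ, List.flatten_cons, List.append_assoc]
    rw [ih, ← List.append_assoc, h, List.append_assoc]

theorem gaps_ofGaps_cons (x : ℕ) (u : List ℕ) : gaps (ofGaps (x :: u)) = u := by
  have split : ∀ u : List ℕ, (ofGaps u).splitOn 1 = u.map (List.replicate · 0) ++ [[]] := by
    intro u
    induction u with
    | nil => rfl
    | cons x t ih =>
      rw [ofGaps, List.flatMap_cons, List.append_assoc, List.singleton_append,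
        List.splitOn_append_cons_self_of_not_mem (by simp [List.mem_replicate])]
      exact congrArg _ ih
  simp [gaps, split, Function.comp_def]

@[simp] theorem ofGaps_append (u v : List ℕ) : ofGaps (u ++ v) = ofGaps u ++ ofGaps v := by
  simp [ofGaps]

theorem ofGaps_flatten_replicate (j : ℕ) (u : List ℕ) :
    ofGaps (List.replicate j u).flatten = (List.replicate j (ofGaps u)).flatten := by
  induction j with
  | zero => rfl
  | succ j ih => simp [List.replicate_succ, ih]

@[simp] theorem sigmak_append (k : ℕ) (u v : List ℕ) :
    sigmak k (u ++ v) = sigmak k u ++ sigmak k v := by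
  simp [sigmak]

theorem sigmak_zero (k : ℕ) : sigmak k [0] = ofGaps [k] := by simp [sigmak, ofGaps]

theorem sigmak_replicate_zero (k x : ℕ) :
    sigmak k (List.replicate x 0) = ofGaps (List.replicate x k) := by
  simp [sigmak, ofGaps, List.flatMap_replicate]

theorem sigmak_ofGaps_append (k : ℕ) {u : List ℕ} (hu : ∀ x ∈ u, 1 ≤ x) :
    sigmak k (ofGaps u) ++ sigmak k [0] = sigmak k [0] ++ ofGaps (gapSigma k u) := by
  have hσ : sigmak k (ofGaps u) = u.flatMap fun x => sigmak k (List.replicate x 0 ++ [1]) := by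
    simp only [sigmak, ofGaps, List.flatMap_assoc]
  have hγ : ofGaps (gapSigma k u) =
      u.flatMap fun x => ofGaps (List.replicate (x - 1) k ++ [2 * k + 1]) := by
    simp only [gapSigma, ofGaps, List.flatMap_assoc]
  rw [hσ, hγ]
  refine List.flatMap_append_eq_append_flatMap fun x hx => ?_
  obtain ⟨y, rfl⟩ : ∃ y, x = y + 1 := ⟨x - 1, by have := hu x hx; omega⟩
  have h : sigmak k [1] ++ sigmak k [0] = ofGaps [2 * k + 1] := by
    simp [sigmak, ofGaps, show 2 * k + 1 = (k + 1) + k by ring, List.replicate_add]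
  rw [sigmak_append, sigmak_replicate_zero, List.append_assoc, h, sigmak_zero,
    List.replicate_succ', ← ofGaps_append, ← ofGaps_append, ← List.replicate_succ',
    List.replicate_succ, Nat.add_sub_cancel]
  rfl

theorem one_le_of_mem_rho2 {k : ℕ} (hk : 1 ≤ k) {w : List ℕ} : ∀ x ∈ rho2 k w, 1 ≤ x := by
  simp only [rho2, List.mem_map]
  rintro x ⟨c, -, rfl⟩
  split <;> omega

theorem rho2_tauk_one (k : ℕ) : rho2 k (tauk k [1]) = gapSigma k [k] := by
  simp [rho2, tauk, gapSigma, List.map_replicate]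

theorem rho2_tauk_append (k : ℕ) (hk : 1 ≤ k) (w : List ℕ) :
    rho2 k (tauk k w) ++ gapSigma k [k] = gapSigma k [k] ++ gapSigma k (rho2 k w) := by
  have hτ : rho2 k (tauk k w) = w.flatMap fun a => rho2 k (tauk k [a]) := by
    simp only [rho2, tauk, List.flatMap_singleton, List.map_flatMap]
  have hγ : gapSigma k (rho2 k w) = w.flatMap fun a => gapSigma k (rho2 k [a]) := by
    simp only [rho2, gapSigma, List.flatMap_map, List.map_singleton, List.flatMap_singleton]
  rw [hτ, hγ]
  refine List.flatMap_append_eq_append_flatMap fun a _ => ?_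
  by_cases ha : a = 1
  · subst ha; rw [rho2_tauk_one]; simp [rho2, gapSigma]
  · have h2k : List.replicate (k + 1) k ++ (List.replicate (k - 1) k ++ [2 * k + 1]) =
        List.replicate (2 * k) k ++ [2 * k + 1] := by
      rw [← List.append_assoc, ← List.replicate_add, show k + 1 + (k - 1) = 2 * k by omega]
    simpa [rho2, tauk, gapSigma, ha, List.map_replicate] using h2k

theorem sigmak_iterate_append (k : ℕ) (hk : 1 ≤ k) (m : ℕ) :
    (sigmak k)^[m + 1] [0] ++ sigmak k [0] =
      sigmak k [0] ++ ofGaps (rho2 k ((tauk k)^[m] [1])) := by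
  induction m with
  | zero => simp [sigmak_zero, rho2]
  | succ m ih =>
    set v := rho2 k ((tauk k)^[m] [1])
    set c := gapSigma k [k]
    have hk' : ∀ x ∈ [k], 1 ≤ x := by simpa using hk
    apply List.append_cancel_right (bs := ofGaps c)
    calc (sigmak k)^[m + 2] [0] ++ sigmak k [0] ++ ofGaps c
        = sigmak k ((sigmak k)^[m + 1] [0] ++ sigmak k [0]) ++ sigmak k [0] := by
          rw [List.append_assoc, ← sigmak_ofGaps_append k hk', sigmak_zero, sigmak_append,
            Function.iterate_succ_apply' (sigmak k) (m + 1), List.append_assoc]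
      _ = sigmak k (ofGaps [k]) ++ (sigmak k (ofGaps v) ++ sigmak k [0]) := by
          rw [ih, sigmak_append, sigmak_zero, List.append_assoc]
      _ = sigmak k [0] ++ ofGaps (c ++ gapSigma k v) := by
          rw [sigmak_ofGaps_append k (one_le_of_mem_rho2 hk), ← List.append_assoc,
            sigmak_ofGaps_append k hk', List.append_assoc, ofGaps_append]
      _ = sigmak k [0] ++ ofGaps (rho2 k ((tauk k)^[m + 1] [1])) ++ ofGaps c := by
          rw [← rho2_tauk_append k hk, Function.iterate_succ_apply', ofGaps_append,
            List.append_assoc]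

theorem stmt_9_general (k : ℕ) (hk : 1 ≤ k) (n j : ℕ) (hn : 1 ≤ n) :
    gaps ((List.replicate j ((sigmak k)^[n] [0])).flatten ++ sigmak k [0]) =
      (List.replicate j (rho2 k ((tauk k)^[n - 1] [1]))).flatten := by
  obtain ⟨m, rfl⟩ : ∃ m, n = m + 1 := ⟨n - 1, by omega⟩
  rw [List.flatten_replicate_append_eq (sigmak_iterate_append k hk m), sigmak_zero,
    ← ofGaps_flatten_replicate, ← ofGaps_append, List.singleton_append, gaps_ofGaps_cons,
    Nat.add_sub_cancel]

theorem stmt_9 (k : ℕ) (hk : 1 ≤ k) (n j : ℕ) (hn : 1 ≤ n) (hj : 1 ≤ j) :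
    gaps ((List.replicate j ((sigmak k)^[n] [0])).flatten ++ sigmak k [0]) =
      (List.replicate j (rho2 k ((tauk k)^[n - 1] [1]))).flatten :=
  stmt_9_general k hk n j hn
end

section
/- Let k ≥ 1 and define W_k(n) = ((k+1)^n - (-1)^n)/(k+2). Call a representation n = Σ_{j=1}^r x_j W_k(j) a valid W-expansion if each x_j ∈ {0,1,...,k}, x_r ≠ 0, and the word x_r x_{r-1} ⋯ x_1 ends with an even number (possibly zero) of letters equal to k. Then every positive integer admits a valid W-expansion. -/
/-!
Greedy expansion. By `W(r+2) = (k+1) W(r+1) + (-1)^(r+1)`, a number `0 ≤ n < W(r+2)` is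
`c W(r+1) + m` with `0 ≤ m < W(r+1)` and a digit `c ≤ k`, except when `n = (k+1) W(r+1)`, which
happens only for `r + 1` even and is then the all-`k` word. Appending the top digit leaves the
trailing run of `k`s unchanged unless the whole word consists of `k`s; since the all-`k` word of
length `s` has value `W(s+1) - [s even]`, it lies below `W(s+1)` only for `s` even. Taking `r`
with `n < W(r+1)` (e.g. `r = 2n`), one finally drops the leading zeros.
-/

def W (k : ℤ) (n : ℕ) : ℤ := ((k + 1) ^ n - (-1) ^ n) / (k + 2)

/-- `x = [x_1, x_2, …, x_r]` (least significant digit first) is a valid `W`-expansion digit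
word: nonempty, digits in `[0,k]`, leading digit `x_r ≠ 0`, and the word `x_r x_{r-1} ⋯ x_1`
ends with an even number (possibly zero) of digits equal to `k`. -/
def ValidW (k : ℕ) (x : List ℕ) : Prop :=
  x ≠ [] ∧ (∀ d ∈ x, d ≤ k) ∧ x.getLastD 0 ≠ 0 ∧
    Even ((x.takeWhile fun d => d = k).length)

/-- The value `Σ_{j=1}^r x_j W_k(j)` of a digit word `x = [x_1, …, x_r]`. -/
def valW (k : ℕ) (x : List ℕ) : ℤ :=
  ∑ i ∈ Finset.range x.length, (x.getD i 0 : ℤ) * W k (i + 1)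

section W

variable {k : ℤ}

lemma mul_W (k : ℤ) (n : ℕ) : (k + 2) * W k n = (k + 1) ^ n - (-1) ^ n :=
  Int.mul_ediv_cancel' <| by
    simpa [show k + 1 - -1 = k + 2 by ring] using sub_dvd_pow_sub_pow (k + 1) (-1) n

lemma W_zero (k : ℤ) : W k 0 = 0 := by simp [W]

lemma W_succ (hk : k + 2 ≠ 0) (n : ℕ) : W k (n + 1) = (k + 1) * W k n + (-1) ^ n := by
  apply mul_left_cancel₀ hk
  linear_combination mul_W k (n + 1) - (k + 1) * mul_W k n

lemma W_one (hk : k + 2 ≠ 0) : W k 1 = 1 := by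
  simp [W_succ hk 0, W_zero]

lemma W_add_two (hk : k + 2 ≠ 0) (n : ℕ) : W k (n + 2) = W k n + k * (k + 1) ^ n := by
  apply mul_left_cancel₀ hk
  linear_combination mul_W k (n + 2) - mul_W k n

lemma one_le_W_succ (hk : 1 ≤ k) (n : ℕ) : 1 ≤ W k (n + 1) := by
  induction n with
  | zero => rw [W_one (by omega)]
  | succ n ih =>
    rw [W_succ (by omega)]
    rcases neg_one_pow_eq_or ℤ (n + 1) with h | h <;> rw [h] <;> nlinarith

lemma le_W_two_mul_add_one (hk : 1 ≤ k) (n : ℕ) : (n : ℤ) + 1 ≤ W k (2 * n + 1) := by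
  induction n with
  | zero => simp [W_one (show k + 2 ≠ 0 by omega)]
  | succ n ih =>
    have hpow : 1 ≤ k * (k + 1) ^ (2 * n + 1) :=
      one_le_mul_of_one_le_of_one_le hk (one_le_pow₀ (by omega))
    rw [show 2 * (n + 1) + 1 = 2 * n + 1 + 2 by ring, W_add_two (by omega)]
    push_cast
    linarith

end W

section Words

variable {k : ℕ}

def trailingRun (k : ℕ) (x : List ℕ) : ℕ := (x.takeWhile fun d => d = k).length

lemma trailingRun_replicate (k s : ℕ) : trailingRun k (List.replicate s k) = s := by
  simp [trailingRun]

lemma trailingRun_append_singleton {x : List ℕ} {c : ℕ} (h : ∃ d ∈ x ++ [c], d ≠ k) :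
    trailingRun k (x ++ [c]) = trailingRun k x := by
  unfold trailingRun
  rw [List.takeWhile_append]
  split_ifs with hall
  · have hx : ∀ d ∈ x, d = k := by
      have := List.takeWhile_eq_self_iff.mp ((List.takeWhile_prefix _).eq_of_length hall)
      simpa using this
    have hc : c ≠ k := by
      obtain ⟨d, hd, hdk⟩ := h
      simp only [List.mem_append, List.mem_singleton] at hd
      rcases hd with hd | rfl
      exacts [absurd (hx d hd) hdk, hdk]
    simp [hc, hall]
  · rfl

lemma valW_nil (k : ℕ) : valW k [] = 0 := by simp [valW]

lemma valW_append_singleton (k : ℕ) (x : List ℕ) (c : ℕ) :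
    valW k (x ++ [c]) = valW k x + c * W k (x.length + 1) := by
  unfold valW
  rw [List.length_append, List.length_singleton, Finset.sum_range_succ,
    List.getD_append_right _ _ _ _ le_rfl, Nat.sub_self]
  congr 1
  exact Finset.sum_congr rfl fun i hi => by
    rw [List.getD_append _ _ _ _ (Finset.mem_range.mp hi)]

lemma valW_replicate (k s : ℕ) :
    valW k (List.replicate s k) = W k (s + 1) - if Even s then 1 else 0 := by
  induction s with
  | zero => simp [valW_nil, W_one (show (k : ℤ) + 2 ≠ 0 by omega)]
  | succ s ih =>
    rw [List.replicate_succ', valW_append_singleton, List.length_replicate, ih,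
      W_succ (show (k : ℤ) + 2 ≠ 0 by omega) (s + 1)]
    rcases Nat.even_or_odd s with h | h
    · simp [h, h.add_one.neg_one_pow, Nat.not_even_iff_odd.mpr h.add_one]
      ring
    · simp [Nat.not_even_iff_odd.mpr h, h.add_one, h.add_one.neg_one_pow]
      ring

lemma even_trailingRun_append_singleton {x : List ℕ} {c : ℕ} (hrun : Even (trailingRun k x))
    (hlt : valW k (x ++ [c]) < W k (x.length + 2)) : Even (trailingRun k (x ++ [c])) := by
  by_cases hall : ∃ d ∈ x ++ [c], d ≠ k
  · rwa [trailingRun_append_singleton hall]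
  · have hrep : x ++ [c] = List.replicate (x.length + 1) k :=
      List.eq_replicate_iff.mpr ⟨by simp, by simpa [or_imp, forall_and] using hall⟩
    rw [hrep, trailingRun_replicate]
    rw [hrep, valW_replicate] at hlt
    by_contra hodd
    simp [hodd] at hlt

theorem exists_word_of_lt_W (hk : 1 ≤ k) (r : ℕ) {n : ℤ} (h0 : 0 ≤ n) (hn : n < W k (r + 1)) :
    ∃ x : List ℕ, x.length = r ∧ (∀ d ∈ x, d ≤ k) ∧ Even (trailingRun k x) ∧ valW k x = n := by
  induction r generalizing n with
  | zero =>
    rw [W_one (by omega)] at hn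
    exact ⟨[], rfl, by simp, by simp [trailingRun], by simp [valW_nil]; omega⟩
  | succ r ih =>
    have hWpos : 0 < W k (r + 1) := one_le_W_succ (by exact_mod_cast hk) r
    have hWsucc := W_succ (show (k : ℤ) + 2 ≠ 0 by omega) (r + 1)
    by_cases hlt : n < (k + 1) * W k (r + 1)
    · obtain ⟨c, hc⟩ := Int.eq_ofNat_of_zero_le (Int.ediv_nonneg h0 hWpos.le)
      have hck : c ≤ k := by
        have := (Int.ediv_lt_iff_lt_mul hWpos).mpr hlt
        omega
      obtain ⟨x, hlen, hdig, hrun, hval⟩ :=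
        ih (Int.emod_nonneg n hWpos.ne') (Int.emod_lt_of_pos n hWpos)
      have hvaly : valW k (x ++ [c]) = n := by
        rw [valW_append_singleton, hlen, hval, ← hc]
        linarith [Int.emod_add_mul_ediv n (W k (r + 1))]
      refine ⟨x ++ [c], by simp [hlen], ?_, ?_, hvaly⟩
      · simpa [or_imp, forall_and] using ⟨hdig, hck⟩
      · exact even_trailingRun_append_singleton hrun (by rw [hvaly, hlen]; exact hn)
    · -- `n = (k+1) W(r+1)`, forcing `(-1)^(r+1) = 1`
      have heven : Even (r + 1) := by
        rcases Nat.even_or_odd (r + 1) with h | h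
        · exact h
        · rw [h.neg_one_pow] at hWsucc
          linarith
      rw [heven.neg_one_pow] at hWsucc
      refine ⟨List.replicate (r + 1) k, by simp, fun d hd => (List.eq_of_mem_replicate hd).le,
        by rwa [trailingRun_replicate], ?_⟩
      rw [valW_replicate, if_pos heven]
      linarith

lemma exists_validW_of_valW_ne_zero (hk : 1 ≤ k) {x : List ℕ} (hdig : ∀ d ∈ x, d ≤ k)
    (hrun : Even (trailingRun k x)) (hx : valW k x ≠ 0) :
    ∃ y : List ℕ, ValidW k y ∧ valW k y = valW k x := by
  induction x using List.reverseRecOn with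
  | nil => exact absurd (valW_nil k) hx
  | append_singleton x c ih =>
    by_cases hc : c = 0
    · subst hc
      have hval : valW k (x ++ [0]) = valW k x := by simp [valW_append_singleton]
      rw [hval] at hx ⊢
      rw [trailingRun_append_singleton ⟨0, by simp, by omega⟩] at hrun
      exact ih (fun d hd => hdig d (List.mem_append_left _ hd)) hrun hx
    · exact ⟨x ++ [c], ⟨by simp, hdig, by rwa [List.getLastD_concat], hrun⟩, rfl⟩

end Words

theorem stmt_11 (k : ℕ) (hk : 1 ≤ k) (n : ℕ) (hn : 0 < n) :
    ∃ x : List ℕ, ValidW k x ∧ (n : ℤ) = valW k x := by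
  have hlt : (n : ℤ) < W k (2 * n + 1) := by
    linarith [le_W_two_mul_add_one (k := (k : ℤ)) (by exact_mod_cast hk) n]
  obtain ⟨x, -, hdig, hrun, hval⟩ := exists_word_of_lt_W hk (2 * n) (by positivity) hlt
  obtain ⟨y, hy, hyval⟩ :=
    exists_validW_of_valW_ne_zero hk hdig hrun (by rw [hval]; exact_mod_cast hn.ne')
  exact ⟨y, hy, by rw [hyval, hval]⟩
end

section
/- Let k ≥ 1 and let σ_k be the morphism on {1,2} defined by σ_k(1) = 1·(1^{k-1}2)^k·1^k and σ_k(2) = 1·(1^{k-1}2)^{2k+1}·1^k, and let τ_k be the morphism with τ_k(1) = 1^{k-1}2 and τ_k(2) = 1^{k-1}2·1^{k+1}. Then the iterative fixed point of σ_k starting from 1 equals 1 concatenated with the iterative fixed point of τ_k starting from 1: σ_k^∞(1) = 1 · τ_k^∞(1). -/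
/-- The morphism `σ_k : 1 ↦ 1(1^{k-1}2)^k 1^k, 2 ↦ 1(1^{k-1}2)^{2k+1} 1^k`. -/
def sigk (k : ℕ) : List ℕ → List ℕ := fun w =>
  w.flatMap fun c =>
    if c = 1 then
      [1] ++ (List.replicate k (List.replicate (k - 1) 1 ++ [2])).flatten ++ List.replicate k 1
    else
      [1] ++ (List.replicate (2 * k + 1) (List.replicate (k - 1) 1 ++ [2])).flatten ++
        List.replicate k 1

/-- `f` is the iterative fixed point of the morphism `φ` starting from the letter `a`:
it agrees with every iterate `φ^m(a)`, `m ≥ 1`. -/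
def IsIterFixedPoint (phi : List ℕ → List ℕ) (a : ℕ) (f : ℕ → ℕ) : Prop :=
  ∀ m, 1 ≤ m → ∀ i, i < (phi^[m] [a]).length → f i = (phi^[m] [a]).getD i 0

/-!
Write `B = 1^{k-1}2 = τ_k(1)` and let `ρ_k` be the morphism `1 ↦ B^k 1^{k+1}, 2 ↦ B^{2k+1} 1^{k+1}`.
Letter by letter one checks the conjugacies `σ_k(w)·1 = 1·ρ_k(w)` and `τ_k²(w)·v = v·ρ_k(w)`,
where `v = τ_k²(1) = ρ_k(1)`. If `x·1 = 1·y`, applying `τ_k²` gives `τ_k²(x)·v = v·τ_k²(y)`, hence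
`ρ_k(x) = τ_k²(y)` by cancelling `v`, and then `σ_k(x)·1 = 1·τ_k²(y)`. Induction on `m` therefore
gives `σ_k^m(1)·1 = 1·τ_k^{2m}(1)`, which is the claim read off position by position.
-/

theorem List.flatMap_append_comm {α β : Type*} {f g : α → List β} {u : List β}
    (h : ∀ a, f a ++ u = u ++ g a) (l : List α) :
    l.flatMap f ++ u = u ++ l.flatMap g := by
  induction l with
  | nil => simp
  | cons a l ih =>
    rw [List.flatMap_cons, List.flatMap_cons, List.append_assoc, ih, ← List.append_assoc, h,
      List.append_assoc]

theorem List.getD_succ_of_append_singleton_eq {α : Type*} {x y : List α} {a d : α}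
    (h : x ++ [a] = [a] ++ y) {i : ℕ} (hi : i + 1 < x.length) :
    x.getD (i + 1) d = y.getD i d := by
  rw [← List.getD_append x [a] d (i + 1) hi, h]
  rfl

section Conjugacy

variable (k : ℕ)

def block : List ℕ := List.replicate (k - 1) 1 ++ [2]

def blockPow (n : ℕ) : List ℕ := (List.replicate n (block k)).flatten

def rhok : List ℕ → List ℕ := fun w =>
  w.flatMap fun c =>
    if c = 1 then blockPow k k ++ List.replicate (k + 1) 1
    else blockPow k (2 * k + 1) ++ List.replicate (k + 1) 1

theorem blockPow_add (a b : ℕ) : blockPow k (a + b) = blockPow k a ++ blockPow k b := by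
  rw [blockPow, List.replicate_add, List.flatten_append]
  rfl

theorem tauk_append (a b : List ℕ) : tauk k (a ++ b) = tauk k a ++ tauk k b :=
  List.flatMap_append ..

theorem sigk_append (a b : List ℕ) : sigk k (a ++ b) = sigk k a ++ sigk k b :=
  List.flatMap_append ..

theorem tauk_replicate_one (n : ℕ) : tauk k (List.replicate n 1) = blockPow k n := by
  induction n with
  | zero => rfl
  | succ n ih =>
    rw [List.replicate_succ', tauk_append, ih, blockPow_add]
    simp [tauk, blockPow, block]

theorem tauk_two : tauk k [2] = block k ++ List.replicate (k + 1) 1 := by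
  simp [tauk, block]

theorem tauk_block (hk : 1 ≤ k) :
    tauk k (block k) = blockPow k k ++ List.replicate (k + 1) 1 := by
  obtain ⟨j, rfl⟩ : ∃ j, k = j + 1 := ⟨k - 1, by omega⟩
  rw [block, tauk_append, tauk_replicate_one, tauk_two, blockPow_add]
  simp [blockPow]

theorem sigk_append_one (w : List ℕ) : sigk k w ++ [1] = [1] ++ rhok k w := by
  refine List.flatMap_append_comm (fun c => ?_) w
  by_cases hc : c = 1 <;>
    simp [hc, blockPow, block, ← List.replicate_succ' (n := k) (a := (1 : ℕ))]

theorem tauk_tauk_append (hk : 1 ≤ k) (w : List ℕ) :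
    tauk k (tauk k w) ++ tauk k (tauk k [1]) = tauk k (tauk k [1]) ++ rhok k w := by
  have hv : tauk k (tauk k [1]) = blockPow k k ++ List.replicate (k + 1) 1 := by
    rw [← tauk_block k hk]; simp [tauk, block]
  have htt : tauk k (tauk k w) = w.flatMap fun c => tauk k (tauk k [c]) := by
    simp only [tauk, List.flatMap_assoc, List.flatMap_singleton]
  rw [htt, hv]
  refine List.flatMap_append_comm (fun c => ?_) w
  by_cases hc : c = 1
  · simp [hc, hv]
  · have h2 : tauk k [c] = tauk k [2] := by simp [tauk, hc]
    rw [h2, tauk_two, tauk_append, tauk_block k hk, tauk_replicate_one, if_neg hc,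
      show 2 * k + 1 = (k + 1) + k by ring, blockPow_add k (k + 1) k]
    simp only [List.append_assoc]

theorem rhok_eq_tauk_tauk_of_append_one (hk : 1 ≤ k) {x y : List ℕ} (h : x ++ [1] = [1] ++ y) :
    rhok k x = tauk k (tauk k y) := by
  have hτ := congrArg (fun w => tauk k (tauk k w)) h
  simp only [tauk_append] at hτ
  exact List.append_cancel_left ((tauk_tauk_append k hk x).symm.trans hτ)

theorem sigk_iterate_append_one (hk : 1 ≤ k) (m : ℕ) :
    (sigk k)^[m] [1] ++ [1] = [1] ++ (tauk k)^[2 * m] [1] := by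
  induction m with
  | zero => rfl
  | succ m ih =>
    rw [Function.iterate_succ_apply', sigk_append_one, rhok_eq_tauk_tauk_of_append_one k hk ih,
      Nat.mul_succ, Function.iterate_succ_apply', Function.iterate_succ_apply']

theorem two_mul_length_le_length_sigk (hk : 1 ≤ k) (w : List ℕ) :
    2 * w.length ≤ (sigk k w).length := by
  induction w with
  | nil => simp
  | cons c w ih =>
    have hc : 2 ≤ (sigk k [c]).length := by
      by_cases h : c = 1 <;> simp [sigk, h] <;> omega
    rw [← List.singleton_append, sigk_append]
    simp only [List.length_append, List.length_singleton] at hc ih ⊢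
    omega

theorem lt_length_sigk_iterate (hk : 1 ≤ k) (m : ℕ) : m < ((sigk k)^[m] [1]).length := by
  induction m with
  | zero => simp
  | succ m ih =>
    rw [Function.iterate_succ_apply']
    have := two_mul_length_le_length_sigk k hk ((sigk k)^[m] [1])
    omega

end Conjugacy

theorem stmt_15 (k : ℕ) (hk : 1 ≤ k) (s t : ℕ → ℕ)
    (hs : IsIterFixedPoint (sigk k) 1 s) (ht : IsIterFixedPoint (tauk k) 1 t) :
    s 0 = 1 ∧ ∀ n, s (n + 1) = t n := by
  refine ⟨?_, fun n => ?_⟩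
  · simpa [sigk] using hs 1 le_rfl 0
  · have hσ := lt_length_sigk_iterate k hk (n + 2)
    have hid := sigk_iterate_append_one k hk (n + 2)
    have hlen := congrArg List.length hid
    simp only [List.length_append, List.length_singleton] at hlen
    rw [hs (n + 2) (by omega) (n + 1) (by omega), ht (2 * (n + 2)) (by omega) n (by omega),
      List.getD_succ_of_append_singleton_eq hid (by omega)]
end

section
/- Let t = (t_n)_{n≥0} be a binary sequence with t_0 = t_1 = 1 such that the factor '00' does not occur in t, and let S be the sum-free set generated by t via Cameron's bijection θ, with associated ternary sequence v = (v_n)_{n≥1} where v_n = 1 if n ∈ S, v_n = * if n ∈ S+S, v_n = 0 otherwise. Then for all n ≥ 1, v_n = * if and only if n is even. In particular, every element of S is odd. -/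
/-- Cameron's greedy construction: `decisions t n` is the list of membership decisions
(in the sum-free set `θ(t)`) for the positions `1, 2, …, n`.  Position `m` is skipped
(decision `false`) if it is a sum of two earlier members; otherwise it consumes the
next unread bit of `t` (`t 0` being the first bit). -/
def decisions (t : ℕ → Bool) : ℕ → List Bool
  | 0 => []
  | n + 1 =>
    let L := decisions t n
    -- membership of the position `m ≥ 1` among the already decided positions
    let isMem : ℕ → Bool := fun m => L.getD (m - 1) false
    -- `m` is a sum of two (not necessarily distinct) earlier members
    let isStar : ℕ → Bool := fun m =>
      (List.range n).any fun a => decide (a + 1 < m) && isMem (a + 1) && isMem (m - (a + 1))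
    -- number of bits of `t` consumed by the positions `1, …, n`
    let idx := ((List.range n).filter fun m => isStar (m + 1) = false).length
    L ++ [if isStar (n + 1) = true then false else t idx]

/-- Membership of the positive integer `n` in the sum-free set `θ(t)`. -/
def memS (t : ℕ → Bool) (n : ℕ) : Prop := (decisions t n).getD (n - 1) false = true

/-!
By induction on the number of decided positions, `θ(t)` consists exactly of the odd numbers
`2k + 1` with `t k = 1`. A sum of two odd members is even, so no odd position is ever blocked and
the odd positions read the bits of `t` in order. Conversely every even position `2k + 2` is
blocked, as `(2j + 1) + (2(k - j) + 1)` for some `j ≤ k` with `t j = t (k - j) = 1`: take `j = k`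
when `t k = 1`, and otherwise `j = k - 1`, using `t 0 = t 1 = 1` and the absence of `00`.
-/

/-- The test `isStar` of `decisions`, with the list `L` of the first `n` decisions abstracted. -/
def isSumIn (L : List Bool) (n m : ℕ) : Bool :=
  (List.range n).any fun a =>
    decide (a + 1 < m) && L.getD (a + 1 - 1) false && L.getD (m - (a + 1) - 1) false

lemma decisions_succ (t : ℕ → Bool) (n : ℕ) :
    decisions t (n + 1) = decisions t n ++
      [if isSumIn (decisions t n) n (n + 1) = true then false
        else t ((List.range n).filter fun m => isSumIn (decisions t n) n (m + 1) = false).length] :=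
  rfl

/-- Index `i` stands for the position `i + 1`, so the members are the odd `2k + 1` with `t k`. -/
def oddPattern (t : ℕ → Bool) (i : ℕ) : Bool := i % 2 == 0 && t (i / 2)

lemma List.getD_map_range {α : Type*} (f : ℕ → α) (n i : ℕ) (d : α) :
    ((List.range n).map f).getD i d = if i < n then f i else d := by
  split_ifs with h
  · simp [List.getD_eq_getElem?_getD, h]
  · rw [List.getD_eq_getElem?_getD, List.getElem?_eq_none (by simpa using h)]
    rfl

lemma getD_oddPattern (t : ℕ → Bool) (n i : ℕ) :
    ((List.range n).map (oddPattern t)).getD i false = true ↔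
      i < n ∧ i % 2 = 0 ∧ t (i / 2) = true := by
  rw [List.getD_map_range]
  split_ifs with h <;> simp [oddPattern, h]

lemma isSumIn_oddPattern_of_even (t : ℕ → Bool) {n m : ℕ} (hm : m % 2 = 0) :
    isSumIn ((List.range n).map (oddPattern t)) n (m + 1) = false := by
  rw [isSumIn, List.any_eq_false]
  intro a _
  simp only [Bool.and_eq_true, decide_eq_true_eq, getD_oddPattern]
  omega

lemma exists_split_of_no_consecutive_zeros (t : ℕ → Bool) (h0 : t 0 = true) (h1 : t 1 = true)
    (h00 : ∀ n, t n = true ∨ t (n + 1) = true) (k : ℕ) :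
    ∃ j ≤ k, t j = true ∧ t (k - j) = true := by
  by_cases hk : t k = true
  · exact ⟨k, le_rfl, hk, by simpa using h0⟩
  · obtain _ | k := k
    · exact absurd h0 hk
    · exact ⟨k, k.le_succ, (h00 k).resolve_right hk, by simpa using h1⟩

lemma isSumIn_oddPattern_of_odd (t : ℕ → Bool) (h0 : t 0 = true) (h1 : t 1 = true)
    (h00 : ∀ n, t n = true ∨ t (n + 1) = true) {n m : ℕ} (hmn : m ≤ n) (hm : m % 2 = 1) :
    isSumIn ((List.range n).map (oddPattern t)) n (m + 1) = true := by
  obtain ⟨j, hjk, htj, htkj⟩ := exists_split_of_no_consecutive_zeros t h0 h1 h00 (m / 2)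
  rw [isSumIn, List.any_eq_true]
  refine ⟨2 * j, List.mem_range.mpr (by omega), ?_⟩
  simp only [Bool.and_eq_true, decide_eq_true_eq, getD_oddPattern]
  refine ⟨⟨by omega, by omega, by omega, by simpa using htj⟩, by omega, by omega, ?_⟩
  rwa [show (m + 1 - (2 * j + 1) - 1) / 2 = m / 2 - j by omega]

lemma length_filter_range_even (n : ℕ) :
    ((List.range n).filter fun m => decide (m % 2 = 0)).length = (n + 1) / 2 := by
  induction n with
  | zero => rfl
  | succ n ih =>
    rw [List.range_succ, List.filter_append, List.length_append, ih]
    by_cases h : n % 2 = 0 <;> simp [h] <;> omega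

lemma decisions_eq_oddPattern (t : ℕ → Bool) (h0 : t 0 = true) (h1 : t 1 = true)
    (h00 : ∀ n, t n = true ∨ t (n + 1) = true) (n : ℕ) :
    decisions t n = (List.range n).map (oddPattern t) := by
  have isSumIn_eq {n m : ℕ} (hmn : m ≤ n) :
      isSumIn ((List.range n).map (oddPattern t)) n (m + 1) = decide (m % 2 = 1) := by
    rcases Nat.mod_two_eq_zero_or_one m with hm | hm
    · simp [isSumIn_oddPattern_of_even t hm, hm]
    · simp [isSumIn_oddPattern_of_odd t h0 h1 h00 hmn hm, hm]
  induction n with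
  | zero => rfl
  | succ n ih =>
    have bits_read : ((List.range n).filter fun m =>
        isSumIn ((List.range n).map (oddPattern t)) n (m + 1) = false).length = (n + 1) / 2 := by
      rw [← length_filter_range_even]
      congr 1
      refine List.filter_congr fun m hm => ?_
      rw [isSumIn_eq (List.mem_range.mp hm).le]
      simp
    rw [decisions_succ, ih, bits_read, isSumIn_eq le_rfl, List.range_succ, List.map_append]
    rcases Nat.mod_two_eq_zero_or_one n with h | h
    · simp [oddPattern, h, show (n + 1) / 2 = n / 2 by omega]
    · simp [oddPattern, h]

lemma memS_iff (t : ℕ → Bool) (h0 : t 0 = true) (h1 : t 1 = true)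
    (h00 : ∀ n, t n = true ∨ t (n + 1) = true) (n : ℕ) :
    memS t n ↔ n % 2 = 1 ∧ t (n / 2) = true := by
  rw [memS, decisions_eq_oddPattern t h0 h1 h00, getD_oddPattern]
  constructor
  · rintro ⟨hn, hpar, ht⟩
    exact ⟨by omega, by rwa [show n / 2 = (n - 1) / 2 by omega]⟩
  · rintro ⟨hpar, ht⟩
    exact ⟨by omega, by omega, by rwa [show (n - 1) / 2 = n / 2 by omega]⟩

theorem stmt_17 (t : ℕ → Bool) (h0 : t 0 = true) (h1 : t 1 = true)
    (h00 : ∀ n, t n = true ∨ t (n + 1) = true) :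
    (∀ n, 1 ≤ n → ((∃ a b, memS t a ∧ memS t b ∧ a + b = n) ↔ Even n)) ∧
      ∀ n, memS t n → Odd n := by
  have odd_of_memS : ∀ n, memS t n → Odd n := fun n hn =>
    Nat.odd_iff.mpr ((memS_iff t h0 h1 h00 n).mp hn).1
  refine ⟨fun n hn => ⟨?_, ?_⟩, odd_of_memS⟩
  · rintro ⟨a, b, ha, hb, rfl⟩
    exact (odd_of_memS a ha).add_odd (odd_of_memS b hb)
  · rintro ⟨k, rfl⟩
    obtain ⟨j, hjk, htj, htkj⟩ := exists_split_of_no_consecutive_zeros t h0 h1 h00 (k - 1)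
    refine ⟨2 * j + 1, 2 * (k - 1 - j) + 1, ?_, ?_, by omega⟩
    · rw [memS_iff t h0 h1 h00]
      exact ⟨by omega, by rwa [show (2 * j + 1) / 2 = j by omega]⟩
    · rw [memS_iff t h0 h1 h00]
      exact ⟨by omega, by rwa [show (2 * (k - 1 - j) + 1) / 2 = k - 1 - j by omega]⟩
end
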